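/- ∫₀^{π/2} ((π/2 − θ)·tan θ − sin²θ) dθ = (π/4)(2 log 2 − 1). -/

import Mathlib

/-!
Substituting `θ = π/2 - x` turns the integrand into `x cot x - cos² x`. Since
`(x log (sin x))' = log (sin x) + x cot x` and `x log (sin x)` vanishes at both ends of
`[0, π/2]`, integration by parts gives `∫ x cot x = -∫ log (sin x) = (π/2) log 2`, while
`∫ cos² x = π/4`.
-/

open Real Filter Set MeasureTheory intervalIntegral

namespace Real

lemma measurable_cot : Measurable cot := by
  rw [show cot = fun x => cos x / sin x from funext cot_eq_cos_div_sin]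
  fun_prop

lemma cot_pi_div_two_sub (x : ℝ) : cot (π / 2 - x) = tan x := by
  rw [cot_eq_cos_div_sin, cos_pi_div_two_sub, sin_pi_div_two_sub, tan_eq_sin_div_cos]

lemma mul_cos_le_sin {x : ℝ} (h0 : 0 ≤ x) (h1 : x ≤ π / 2) : x * cos x ≤ sin x := by
  rcases h1.lt_or_eq with h1 | rfl
  · have hcos : 0 < cos x := cos_pos_of_mem_Ioo ⟨by linarith [pi_pos], h1⟩
    rw [← le_div_iff₀ hcos, ← tan_eq_sin_div_cos]
    exact le_tan h0 h1
  · simp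

lemma mul_cot_mem_Icc {x : ℝ} (h0 : 0 < x) (h1 : x ≤ π / 2) : x * cot x ∈ Icc 0 1 := by
  have hsin : 0 < sin x := sin_pos_of_pos_of_lt_pi h0 (by linarith [pi_pos])
  have hcos : 0 ≤ cos x := cos_nonneg_of_mem_Icc ⟨by linarith [pi_pos], h1⟩
  rw [cot_eq_cos_div_sin, ← mul_div_assoc]
  exact ⟨by positivity, div_le_one_of_le₀ (mul_cos_le_sin h0.le h1) hsin.le⟩

lemma intervalIntegrable_mul_cot :
    IntervalIntegrable (fun x => x * cot x) volume 0 (π / 2) := by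
  refine (intervalIntegrable_const (c := (1 : ℝ))).mono_fun'
    (measurable_id.mul measurable_cot).aestronglyMeasurable ?_
  filter_upwards [ae_restrict_mem measurableSet_uIoc] with x hx
  rw [uIoc_of_le (by positivity)] at hx
  obtain ⟨hnonneg, hle⟩ := mul_cot_mem_Icc hx.1 hx.2
  rwa [norm_of_nonneg hnonneg]

lemma hasDerivAt_mul_log_sin {x : ℝ} (hx : sin x ≠ 0) :
    HasDerivAt (fun x => x * log (sin x)) (log (sin x) + x * cot x) x := by
  refine ((hasDerivAt_id' x).mul ((hasDerivAt_sin x).log hx)).congr_deriv ?_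
  rw [cot_eq_cos_div_sin]
  ring

-- Near `0`, `x log (sin x) = x log x + x log (sinc x)`, and both terms are continuous.
lemma continuousAt_mul_log_sin_zero : ContinuousAt (fun x => x * log (sin x)) 0 := by
  have hsinc : sinc 0 ≠ 0 := by simp
  have hcont : ContinuousAt (fun x => x * log x + x * log (sinc x)) 0 :=
    continuous_mul_log.continuousAt.add
      (continuousAt_id.mul (continuous_sinc.continuousAt.log hsinc))
  refine hcont.congr ?_
  filter_upwards [continuous_sinc.continuousAt.eventually_ne hsinc] with x hx
  rcases eq_or_ne x 0 with rfl | hx0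
  · simp
  · rw [← mul_add, ← log_mul hx0 hx, sinc_of_ne_zero hx0, mul_div_cancel₀ _ hx0]

lemma continuousOn_mul_log_sin :
    ContinuousOn (fun x => x * log (sin x)) (Icc 0 (π / 2)) := by
  intro x ⟨h0, h1⟩
  refine ContinuousAt.continuousWithinAt ?_
  rcases h0.eq_or_lt with rfl | h0
  · exact continuousAt_mul_log_sin_zero
  · have hsin : sin x ≠ 0 := (sin_pos_of_pos_of_lt_pi h0 (by linarith [pi_pos])).ne'
    exact (hasDerivAt_mul_log_sin hsin).continuousAt

theorem integral_mul_cot_zero_pi_div_two : ∫ x in 0..π / 2, x * cot x = π / 2 * log 2 := by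
  have hlog : IntervalIntegrable (fun x => log (sin x)) volume 0 (π / 2) :=
    intervalIntegrable_log_sin
  have hparts := integral_eq_sub_of_hasDerivAt_of_le (by positivity) continuousOn_mul_log_sin
    (fun x hx => hasDerivAt_mul_log_sin (sin_pos_of_pos_of_lt_pi hx.1
      (by linarith [hx.2, pi_pos])).ne') (hlog.add intervalIntegrable_mul_cot)
  rw [integral_add hlog intervalIntegrable_mul_cot, integral_log_sin_zero_pi_div_two] at hparts
  simp only [sin_pi_div_two, log_one, mul_zero] at hparts
  linarith

end Real

theorem integral_aux3 :
    ∫ θ in (0:ℝ)..(π/2), ((π/2 - θ) * Real.tan θ - (Real.sin θ)^2)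
      = (π/4) * (2 * Real.log 2 - 1) := by
  have hreflect := integral_comp_sub_left (fun u => u * cot u - cos u ^ 2) (π / 2) (a := 0)
    (b := π / 2)
  simp only [cot_pi_div_two_sub, cos_pi_div_two_sub, sub_self, sub_zero] at hreflect
  have hcos_sq : IntervalIntegrable (fun x => cos x ^ 2) volume 0 (π / 2) :=
    (continuous_cos.pow 2).intervalIntegrable _ _
  rw [hreflect, integral_sub intervalIntegrable_mul_cot hcos_sq, integral_mul_cot_zero_pi_div_two, integral_cos_sq]
  simp only [cos_pi_div_two, sin_pi_div_two, cos_zero, sin_zero, mul_one, mul_zero, sub_self,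
    zero_add, sub_zero]
  ring
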